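/- Let A : X → ℝ^{m×n} be Lipschitz and uniformly bounded on convex X ⊆ ℝⁿ, with σ_min(A(x)) ≥ γ_A > 0 on X. Then the orthogonal projection matrix P(x) = I − A(x)ᵀ(A(x)A(x)ᵀ)⁻¹A(x) onto N(A(x)) is Lipschitz continuous on X. -/
import Mathlib


open Matrix Real BigOperators RealInnerProductSpace

/-- Euclidean norm of a finite-dimensional real vector. -/
noncomputable def eunorm {ι : Type*} [Fintype ι] (x : ι → ℝ) : ℝ :=
  Real.sqrt (∑ i, x i ^ 2)

/-- ℓ¹ norm of a finite-dimensional real vector. -/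
noncomputable def l1norm {ι : Type*} [Fintype ι] (x : ι → ℝ) : ℝ :=
  ∑ i, |x i|

lemma eunorm_eq_norm {ι : Type*} [Fintype ι] (x : ι → ℝ) :
    eunorm x = ‖(WithLp.equiv 2 (ι → ℝ)).symm x‖ := by
  rw [EuclideanSpace.norm_eq]
  simp [eunorm, sq_abs]

lemma eunorm_nonneg {ι : Type*} [Fintype ι] (x : ι → ℝ) : 0 ≤ eunorm x :=
  Real.sqrt_nonneg _

lemma eunorm_neg {ι : Type*} [Fintype ι] (x : ι → ℝ) : eunorm (-x) = eunorm x := by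
  simp [eunorm, neg_sq]

lemma eunorm_add_le {ι : Type*} [Fintype ι] (x y : ι → ℝ) :
    eunorm (x + y) ≤ eunorm x + eunorm y := by
  rw [eunorm_eq_norm, eunorm_eq_norm, eunorm_eq_norm]
  exact norm_add_le _ _

lemma dot_self_eq {ι : Type*} [Fintype ι] (x : ι → ℝ) : x ⬝ᵥ x = eunorm x ^ 2 := by
  rw [eunorm, Real.sq_sqrt (by positivity)]
  simp [dotProduct, sq]

lemma dot_le_eunorm {ι : Type*} [Fintype ι] (x y : ι → ℝ) :
    x ⬝ᵥ y ≤ eunorm x * eunorm y := by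
  have := real_inner_le_norm
    ((WithLp.equiv 2 (ι → ℝ)).symm x) ((WithLp.equiv 2 (ι → ℝ)).symm y)
  simpa [eunorm_eq_norm, PiLp.inner_apply, RCLike.inner_apply, dotProduct,
    mul_comm] using this

lemma opB_comp {k l r : Type*} [Fintype k] [Fintype l] [Fintype r]
    (M : Matrix k l ℝ) (N : Matrix l r ℝ) (c d : ℝ) (hc : 0 ≤ c)
    (hM : ∀ v, eunorm (M.mulVec v) ≤ c * eunorm v)
    (hN : ∀ v, eunorm (N.mulVec v) ≤ d * eunorm v) :
    ∀ v, eunorm ((M * N).mulVec v) ≤ c * d * eunorm v := by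
  intro v
  rw [← Matrix.mulVec_mulVec]
  calc eunorm (M.mulVec (N.mulVec v)) ≤ c * eunorm (N.mulVec v) := hM _
    _ ≤ c * (d * eunorm v) := mul_le_mul_of_nonneg_left (hN v) hc
    _ = c * d * eunorm v := by ring

lemma opB_add {k l : Type*} [Fintype k] [Fintype l]
    (M N : Matrix k l ℝ) (c d : ℝ)
    (hM : ∀ v, eunorm (M.mulVec v) ≤ c * eunorm v)
    (hN : ∀ v, eunorm (N.mulVec v) ≤ d * eunorm v) :
    ∀ v, eunorm ((M + N).mulVec v) ≤ (c + d) * eunorm v := by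
  intro v
  rw [Matrix.add_mulVec]
  calc eunorm (M.mulVec v + N.mulVec v) ≤ eunorm (M.mulVec v) + eunorm (N.mulVec v) :=
        eunorm_add_le _ _
    _ ≤ c * eunorm v + d * eunorm v := add_le_add (hM v) (hN v)
    _ = (c + d) * eunorm v := by ring

lemma opB_transpose {k l : Type*} [Fintype k] [Fintype l]
    (M : Matrix k l ℝ) (c : ℝ) (hc : 0 ≤ c)
    (hM : ∀ v, eunorm (M.mulVec v) ≤ c * eunorm v) :
    ∀ w, eunorm (Mᵀ.mulVec w) ≤ c * eunorm w := by
  intro w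
  set u := Mᵀ.mulVec w with hu
  have key : eunorm u ^ 2 ≤ (c * eunorm w) * eunorm u := by
    have h1 : u ⬝ᵥ u = w ⬝ᵥ M.mulVec u := by
      nth_rewrite 1 [hu]
      rw [Matrix.mulVec_transpose, ← Matrix.dotProduct_mulVec]
    calc eunorm u ^ 2 = u ⬝ᵥ u := (dot_self_eq u).symm
      _ = w ⬝ᵥ M.mulVec u := h1
      _ ≤ eunorm w * eunorm (M.mulVec u) := dot_le_eunorm _ _
      _ ≤ eunorm w * (c * eunorm u) :=
          mul_le_mul_of_nonneg_left (hM u) (eunorm_nonneg w)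
      _ = (c * eunorm w) * eunorm u := by ring
  rcases (eunorm_nonneg u).eq_or_lt with h | h
  · rw [← h]; exact mul_nonneg hc (eunorm_nonneg w)
  · nlinarith

lemma opB_inv {k : Type*} [Fintype k] [DecidableEq k]
    (B : Matrix k k ℝ) (γ : ℝ) (hγ : 0 < γ) (hdet : IsUnit B.det)
    (hsv : ∀ y, γ * eunorm y ≤ eunorm (B.mulVec y)) :
    ∀ w, eunorm (B⁻¹.mulVec w) ≤ γ⁻¹ * eunorm w := by
  intro w
  have := hsv (B⁻¹.mulVec w)
  rw [Matrix.mulVec_mulVec, Matrix.mul_nonsing_inv _ hdet, Matrix.one_mulVec] at this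
  rw [inv_mul_eq_div, le_div_iff₀ hγ]
  linarith
set_option maxHeartbeats 1000000 in
theorem stmt10 {p m n : ℕ} (X : Set (EuclideanSpace ℝ (Fin p))) (hX : Convex ℝ X)
    (A : EuclideanSpace ℝ (Fin p) → Matrix (Fin m) (Fin n) ℝ)
    (γA κA LA : ℝ) (hγ : 0 < γA)
    (hlip : ∀ x ∈ X, ∀ y ∈ X, ∀ v : Fin n → ℝ,
      eunorm ((A x - A y).mulVec v) ≤ LA * ‖x - y‖ * eunorm v)
    (hbd : ∀ x ∈ X, ∀ v : Fin n → ℝ, eunorm ((A x).mulVec v) ≤ κA * eunorm v)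
    (hinv : ∀ x ∈ X, IsUnit (A x * (A x)ᵀ).det)
    (hsv : ∀ x ∈ X, ∀ y : Fin m → ℝ,
      γA ^ 2 * eunorm y ≤ eunorm ((A x * (A x)ᵀ).mulVec y))
    (P : EuclideanSpace ℝ (Fin p) → Matrix (Fin n) (Fin n) ℝ)
    (hP : ∀ x, P x = 1 - (A x)ᵀ * (A x * (A x)ᵀ)⁻¹ * A x) :
    ∃ C : ℝ, 0 ≤ C ∧ ∀ x ∈ X, ∀ y ∈ X, ∀ v : Fin n → ℝ,
      eunorm ((P x - P y).mulVec v) ≤ C * ‖x - y‖ * eunorm v := by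
  set L' := max LA 0 with hL'def
  set κ' := max κA 0 with hκ'def
  set g := (γA ^ 2)⁻¹ with hgdef
  have hg : 0 ≤ g := by positivity
  have hL' : 0 ≤ L' := le_max_right _ _
  have hκ' : 0 ≤ κ' := le_max_right _ _
  refine ⟨L' * g * κ' + κ' * (g * (2 * L' * κ') * g) * κ' + κ' * g * L',
    by positivity, ?_⟩
  intro x hx y hy v
  have hε : (0:ℝ) ≤ ‖x - y‖ := norm_nonneg _
  -- basic bounds with nonneg constants
  have hAx : ∀ v, eunorm ((A x).mulVec v) ≤ κ' * eunorm v := fun v =>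
    (hbd x hx v).trans (mul_le_mul_of_nonneg_right (le_max_left _ _) (eunorm_nonneg v))
  have hAy : ∀ v, eunorm ((A y).mulVec v) ≤ κ' * eunorm v := fun v =>
    (hbd y hy v).trans (mul_le_mul_of_nonneg_right (le_max_left _ _) (eunorm_nonneg v))
  have hDxy : ∀ v, eunorm ((A x - A y).mulVec v) ≤ L' * ‖x - y‖ * eunorm v := fun v =>
    (hlip x hx y hy v).trans (mul_le_mul_of_nonneg_right
      (mul_le_mul_of_nonneg_right (le_max_left _ _) hε) (eunorm_nonneg v))
  have hDyx : ∀ v, eunorm ((A y - A x).mulVec v) ≤ L' * ‖x - y‖ * eunorm v := by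
    intro v
    have : A y - A x = -(A x - A y) := (neg_sub _ _).symm
    rw [this, Matrix.neg_mulVec, eunorm_neg]
    exact hDxy v
  have hLε : (0:ℝ) ≤ L' * ‖x - y‖ := mul_nonneg hL' hε
  have hAxT := opB_transpose (A x) κ' hκ' hAx
  have hAyT := opB_transpose (A y) κ' hκ' hAy
  have hDxyT := opB_transpose (A x - A y) (L' * ‖x - y‖) hLε hDxy
  have hDyxT := opB_transpose (A y - A x) (L' * ‖x - y‖) hLε hDyx
  have hγ2 : (0:ℝ) < γA ^ 2 := by positivity
  have hQx : ∀ w, eunorm ((A x * (A x)ᵀ)⁻¹.mulVec w) ≤ g * eunorm w := by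
    simpa [hgdef] using opB_inv (A x * (A x)ᵀ) (γA ^ 2) hγ2 (hinv x hx) (hsv x hx)
  have hQy : ∀ w, eunorm ((A y * (A y)ᵀ)⁻¹.mulVec w) ≤ g * eunorm w := by
    simpa [hgdef] using opB_inv (A y * (A y)ᵀ) (γA ^ 2) hγ2 (hinv y hy) (hsv y hy)
  -- the difference of the Gram matrices
  have hB : A y * (A y)ᵀ - A x * (A x)ᵀ
      = (A y - A x) * (A y)ᵀ + A x * (A y - A x)ᵀ := by
    rw [Matrix.transpose_sub, Matrix.sub_mul, Matrix.mul_sub]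
    abel
  -- the difference of the inverses
  have hQ : (A x * (A x)ᵀ)⁻¹ - (A y * (A y)ᵀ)⁻¹ = (A x * (A x)ᵀ)⁻¹ * (A y * (A y)ᵀ - A x * (A x)ᵀ) * (A y * (A y)ᵀ)⁻¹ := by
    calc (A x * (A x)ᵀ)⁻¹ - (A y * (A y)ᵀ)⁻¹ = (A x * (A x)ᵀ)⁻¹ * ((A y * (A y)ᵀ) * (A y * (A y)ᵀ)⁻¹) - ((A x * (A x)ᵀ)⁻¹ * (A x * (A x)ᵀ)) * (A y * (A y)ᵀ)⁻¹ := by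
          rw [Matrix.mul_nonsing_inv _ (hinv y hy), Matrix.nonsing_inv_mul _ (hinv x hx)]
          rw [Matrix.mul_one, Matrix.one_mul]
      _ = (A x * (A x)ᵀ)⁻¹ * (A y * (A y)ᵀ - A x * (A x)ᵀ) * (A y * (A y)ᵀ)⁻¹ := by
          rw [Matrix.mul_sub, Matrix.sub_mul, ← Matrix.mul_assoc, ← Matrix.mul_assoc]
  -- main algebraic identity
  have hM : P x - P y
      = -(((A x - A y)ᵀ * (A x * (A x)ᵀ)⁻¹) * A x
          + ((A y)ᵀ * (((A x * (A x)ᵀ)⁻¹ * ((A y - A x) * (A y)ᵀ + A x * (A y - A x)ᵀ)) * (A y * (A y)ᵀ)⁻¹)) * A x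
          + ((A y)ᵀ * (A y * (A y)ᵀ)⁻¹) * (A x - A y)) := by
    rw [hP, hP, ← hB]
    have h2 : (A x * (A x)ᵀ)⁻¹ * ((A y * (A y)ᵀ - A x * (A x)ᵀ) * (A y * (A y)ᵀ)⁻¹) = (A x * (A x)ᵀ)⁻¹ - (A y * (A y)ᵀ)⁻¹ := by
      rw [← Matrix.mul_assoc]; exact hQ.symm
    rw [Matrix.mul_assoc (A x * (A x)ᵀ)⁻¹, h2]
    simp only [Matrix.transpose_sub, Matrix.sub_mul, Matrix.mul_sub]
    abel
  -- bound each term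
  have hT1 : ∀ w, eunorm (((A x - A y)ᵀ * (A x * (A x)ᵀ)⁻¹ * A x).mulVec w)
      ≤ L' * ‖x - y‖ * g * κ' * eunorm w :=
    opB_comp ((A x - A y)ᵀ * (A x * (A x)ᵀ)⁻¹) (A x) (L' * ‖x - y‖ * g) κ'
      (mul_nonneg hLε hg)
      (opB_comp ((A x - A y)ᵀ) ((A x * (A x)ᵀ)⁻¹) (L' * ‖x - y‖) g hLε hDxyT hQx) hAx
  have hBbd : ∀ w, eunorm (((A y - A x) * (A y)ᵀ + A x * (A y - A x)ᵀ).mulVec w)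
      ≤ (L' * ‖x - y‖ * κ' + κ' * (L' * ‖x - y‖)) * eunorm w :=
    opB_add ((A y - A x) * (A y)ᵀ) (A x * (A y - A x)ᵀ) (L' * ‖x - y‖ * κ')
      (κ' * (L' * ‖x - y‖))
      (opB_comp (A y - A x) ((A y)ᵀ) (L' * ‖x - y‖) κ' hLε hDyx hAyT)
      (opB_comp (A x) ((A y - A x)ᵀ) κ' (L' * ‖x - y‖) hκ' hAx hDyxT)
  have hT2 : ∀ w, eunorm (((A y)ᵀ *
        ((A x * (A x)ᵀ)⁻¹ * ((A y - A x) * (A y)ᵀ + A x * (A y - A x)ᵀ) *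
          (A y * (A y)ᵀ)⁻¹) * A x).mulVec w)
      ≤ κ' * (g * (L' * ‖x - y‖ * κ' + κ' * (L' * ‖x - y‖)) * g) * κ' * eunorm w :=
    opB_comp ((A y)ᵀ *
        ((A x * (A x)ᵀ)⁻¹ * ((A y - A x) * (A y)ᵀ + A x * (A y - A x)ᵀ) *
          (A y * (A y)ᵀ)⁻¹)) (A x)
      (κ' * (g * (L' * ‖x - y‖ * κ' + κ' * (L' * ‖x - y‖)) * g)) κ'
      (mul_nonneg hκ' (mul_nonneg (mul_nonneg hg (by positivity)) hg))
      (opB_comp ((A y)ᵀ)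
        ((A x * (A x)ᵀ)⁻¹ * ((A y - A x) * (A y)ᵀ + A x * (A y - A x)ᵀ) *
          (A y * (A y)ᵀ)⁻¹)
        κ' (g * (L' * ‖x - y‖ * κ' + κ' * (L' * ‖x - y‖)) * g) hκ' hAyT
        (opB_comp ((A x * (A x)ᵀ)⁻¹ * ((A y - A x) * (A y)ᵀ + A x * (A y - A x)ᵀ))
          ((A y * (A y)ᵀ)⁻¹)
          (g * (L' * ‖x - y‖ * κ' + κ' * (L' * ‖x - y‖))) g
          (mul_nonneg hg (by positivity))
          (opB_comp ((A x * (A x)ᵀ)⁻¹)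
            ((A y - A x) * (A y)ᵀ + A x * (A y - A x)ᵀ)
            g (L' * ‖x - y‖ * κ' + κ' * (L' * ‖x - y‖)) hg hQx hBbd) hQy)) hAx
  have hT3 : ∀ w, eunorm (((A y)ᵀ * (A y * (A y)ᵀ)⁻¹ * (A x - A y)).mulVec w)
      ≤ κ' * g * (L' * ‖x - y‖) * eunorm w :=
    opB_comp ((A y)ᵀ * (A y * (A y)ᵀ)⁻¹) (A x - A y) (κ' * g) (L' * ‖x - y‖)
      (mul_nonneg hκ' hg)
      (opB_comp ((A y)ᵀ) ((A y * (A y)ᵀ)⁻¹) κ' g hκ' hAyT hQy) hDxy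
  have hsum := opB_add _ _ _ _ (opB_add _ _ _ _ hT1 hT2) hT3
  rw [hM, Matrix.neg_mulVec, eunorm_neg]
  refine (hsum v).trans (le_of_eq ?_)
  ring
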